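/- Let S₁,…,Sₙ be pairwise disjoint polyominoes in ℤ×ℤ, each of which is y-monotone, with regions R₁,…,Rₙ ⊆ ℝ². Then the system can be spread apart using only horizontal translations: for every d > 0 there exists a valid motion g₁,…,gₙ of R₁,…,Rₙ in which each g_i(t) is a horizontal translation (g_i(t)(x,y) = (x + c_i(t), y) for some c_i(t) ∈ ℝ), and at time 1 the sets g_i(1)''(R_i) and g_j(1)''(R_j) are at (infimum) distance at least d from each other for all i ≠ j. -/

import Mathlib

/-!
Say that piece `i` precedes piece `j` if, in some row they share, every cell of `i` lies left
of every cell of `j`. Since rows are intervals and pieces are connected, a shared column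
carries this order from one shared row to the next, so it is the same in every shared row.
The pieces can be ranked compatibly with it: add them in increasing order of lowest row; the
predecessors and successors of a new piece all meet its lowest row, where they lie on either
side of it, so each predecessor precedes each successor and the new piece fits in between.
Translating each piece at a speed proportional to its rank, no piece ever catches up with one
to its right, and large enough speed gaps separate everything by time `1`.
-/

noncomputable section

/-- The Euclidean plane. -/
abbrev Plane := EuclideanSpace ℝ (Fin 2)

/-- Two cells of `ℤ × ℤ` are edge-adjacent iff they are at Euclidean distance 1. -/
def EdgeAdj (c d : ℤ × ℤ) : Prop := (c.1 - d.1).natAbs + (c.2 - d.2).natAbs = 1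

/-- A polyomino: a finite nonempty edge-connected set of cells. -/
def IsPolyomino (S : Finset (ℤ × ℤ)) : Prop :=
  S.Nonempty ∧ ∀ c ∈ S, ∀ d ∈ S,
    Relation.ReflTransGen (fun a b => a ∈ S ∧ b ∈ S ∧ EdgeAdj a b) c d

/-- The region of a polyomino: the union of the closed unit squares of its cells. -/
def Region (S : Finset (ℤ × ℤ)) : Set Plane :=
  {p | ∃ c ∈ S, p 0 ∈ Set.Icc (c.1 : ℝ) (c.1 + 1) ∧ p 1 ∈ Set.Icc (c.2 : ℝ) (c.2 + 1)}

/-- A valid motion of the sets `R i`: each `g i t` is an isometry of the plane, `g i 0 = id`,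
`(t, x) ↦ g i t x` is continuous, and at every time the interiors of the moved sets are
pairwise disjoint. -/
def IsValidMotion {n : ℕ} (R : Fin n → Set Plane)
    (g : Fin n → unitInterval → Plane → Plane) : Prop :=
  (∀ i t, Isometry (g i t)) ∧
  (∀ i, g i 0 = id) ∧
  (∀ i, Continuous fun q : unitInterval × Plane => g i q.1 q.2) ∧
  ∀ t, Pairwise fun i j => Disjoint (interior (g i t '' R i)) (interior (g j t '' R j))

/-- The infimum distance between two subsets of the plane. -/
def setDist (A B : Set Plane) : ℝ := sInf (Set.image2 dist A B)


/-- `S` is y-monotone: every row of `S` is an interval of `ℤ`. -/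
def YMonotone (S : Finset (ℤ × ℤ)) : Prop :=
  ∀ r a b c : ℤ, (a, r) ∈ S → (c, r) ∈ S → a ≤ b → b ≤ c → (b, r) ∈ S

theorem exists_injective_rank {α β : Type*} [Fintype α] [LinearOrder β] {r : α → α → Prop}
    (b : α → β) (hirr : ∀ a, ¬r a a)
    (hshort : ∀ i j k, r i j → r j k → b i ≤ b j → b k ≤ b j → r i k) :
    ∃ f : α → ℕ, Function.Injective f ∧ ∀ i j, r i j → f i < f j := by
  classical
  suffices ∀ s : Finset α, ∃ f : α → ℕ, Set.InjOn f s ∧ ∀ i ∈ s, ∀ j ∈ s, r i j → f i < f j by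
    obtain ⟨f, hinj, hf⟩ := this Finset.univ
    exact ⟨f, by simpa using hinj, fun i j => hf i (by simp) j (by simp)⟩
  intro s
  induction s using Finset.induction_on_max_value b with
  | empty => exact ⟨0, by simp, by simp⟩
  | insert a s ha hmax ih =>
    obtain ⟨f, hinj, hf⟩ := ih
    -- `a` is ranked just above all of its predecessors in `s`
    set m := (s.filter (r · a)).sup (f · + 1)
    have hpred : ∀ i ∈ s, r i a → f i + 1 ≤ m := fun i hi h =>
      Finset.le_sup (f := (f · + 1)) (Finset.mem_filter.2 ⟨hi, h⟩)
    have hsucc : ∀ k ∈ s, r a k → m ≤ f k := fun k hk h => Finset.sup_le fun i hi => by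
      obtain ⟨hi, hia⟩ := Finset.mem_filter.1 hi
      exact hf i hi k hk (hshort i a k hia h (hmax i hi) (hmax k hk))
    refine ⟨fun x => if x = a then 2 * m + 1 else 2 * f x + 2, ?_, ?_⟩
    · intro x hx y hy hxy
      simp only [Finset.coe_insert, Set.mem_insert_iff, Finset.mem_coe] at hx hy
      by_cases hxa : x = a <;> by_cases hya : y = a <;>
        simp only [hxa, hya, if_true, if_false] at hxy
      · exact hxa.trans hya.symm
      · omega
      · omega
      · exact hinj (hx.resolve_left hxa) (hy.resolve_left hya) (by omega)
    · intro i hi j hj hij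
      simp only [Finset.mem_insert] at hi hj
      have hne : ∀ x ∈ s, x ≠ a := fun x hx h => ha (h ▸ hx)
      rcases hi with rfl | hi <;> rcases hj with rfl | hj
      · exact absurd hij (hirr _)
      · simp only [↓reduceIte, if_neg (hne j hj)]
        linarith [hsucc j hj hij]
      · simp only [↓reduceIte, if_neg (hne i hi)]
        linarith [hpred i hi hij]
      · simp only [if_neg (hne i hi), if_neg (hne j hj)]
        linarith [hf i hi j hj hij]

namespace IsPolyomino

variable {S : Finset (ℤ × ℤ)}

theorem exists_mem_row_of_le_of_le (hS : IsPolyomino S) {a b r₁ r₂ r : ℤ}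
    (ha : (a, r₁) ∈ S) (hb : (b, r₂) ∈ S) (h₁ : r₁ ≤ r) (h₂ : r ≤ r₂) :
    ∃ x, (x, r) ∈ S := by
  suffices ∀ c, Relation.ReflTransGen (fun a b => a ∈ S ∧ b ∈ S ∧ EdgeAdj a b) (a, r₁) c →
      min r₁ c.2 ≤ r → r ≤ max r₁ c.2 → ∃ x, (x, r) ∈ S from
    this (b, r₂) (hS.2 _ ha _ hb) (by simp; omega) (by simp; omega)
  intro c hc
  induction hc with
  | refl =>
    intro h₁ h₂
    simp only [min_self, max_self] at h₁ h₂
    exact ⟨a, by rwa [le_antisymm h₂ h₁]⟩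
  | @tail p q _ hpq ih =>
    intro h₁ h₂
    obtain ⟨-, hq, hadj⟩ := hpq
    unfold EdgeAdj at hadj
    by_cases hrq : r = q.2
    · exact ⟨q.1, by rwa [hrq]⟩
    · exact ih (by omega) (by omega)

theorem exists_mem_row_mem_row_succ (hS : IsPolyomino S) {a b r : ℤ}
    (ha : (a, r) ∈ S) (hb : (b, r + 1) ∈ S) :
    ∃ x, (x, r) ∈ S ∧ (x, r + 1) ∈ S := by
  suffices ∀ c, Relation.ReflTransGen (fun a b => a ∈ S ∧ b ∈ S ∧ EdgeAdj a b) c (b, r + 1) →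
      c.2 ≤ r → ∃ x, (x, r) ∈ S ∧ (x, r + 1) ∈ S from this (a, r) (hS.2 _ ha _ hb) le_rfl
  intro c hc
  induction hc using Relation.ReflTransGen.head_induction_on with
  | refl => intro h; simp at h
  | @head p q hpq _ ih =>
    intro hp
    obtain ⟨hpS, hqS, hadj⟩ := hpq
    unfold EdgeAdj at hadj
    by_cases hq : q.2 ≤ r
    · exact ih hq
    · obtain ⟨p₁, p₂⟩ := p
      obtain ⟨q₁, q₂⟩ := q
      dsimp only at hp hq hadj
      obtain ⟨rfl, rfl, rfl⟩ : q₁ = p₁ ∧ p₂ = r ∧ q₂ = r + 1 := by omega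
      exact ⟨q₁, hpS, hqS⟩

end IsPolyomino

def LeftOf (A B : Finset (ℤ × ℤ)) (r : ℤ) : Prop :=
  (∃ x, (x, r) ∈ A) ∧ (∃ y, (y, r) ∈ B) ∧ ∀ x y, (x, r) ∈ A → (y, r) ∈ B → x < y

namespace LeftOf

variable {A B C : Finset (ℤ × ℤ)} {r : ℤ}

theorem irrefl : ¬LeftOf A A r := fun ⟨⟨x, hx⟩, _, h⟩ => lt_irrefl x (h x x hx hx)

theorem trans (hAB : LeftOf A B r) (hBC : LeftOf B C r) : LeftOf A C r := by
  obtain ⟨hA, ⟨y, hy⟩, h₁⟩ := hAB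
  obtain ⟨-, hC, h₂⟩ := hBC
  exact ⟨hA, hC, fun x z hx hz => (h₁ x y hx hy).trans (h₂ y z hy hz)⟩

theorem of_lt (hAB : Disjoint A B) (hA : YMonotone A) (hB : YMonotone B) {x y : ℤ}
    (hx : (x, r) ∈ A) (hy : (y, r) ∈ B) (hxy : x < y) : LeftOf A B r := by
  refine ⟨⟨x, hx⟩, ⟨y, hy⟩, fun x' y' hx' hy' => ?_⟩
  by_contra! hyx
  rcases le_or_gt y' x with h | h
  · exact Finset.disjoint_left.mp hAB hx (hB r y' x y hy' hy h hxy.le)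
  · exact Finset.disjoint_left.mp hAB (hA r x y' x' hx hx' h.le hyx) hy'

theorem total (hAB : Disjoint A B) (hA : YMonotone A) (hB : YMonotone B) {x y : ℤ}
    (hx : (x, r) ∈ A) (hy : (y, r) ∈ B) : LeftOf A B r ∨ LeftOf B A r := by
  have hne : x ≠ y := by rintro rfl; exact Finset.disjoint_left.mp hAB hx hy
  rcases hne.lt_or_gt with h | h
  · exact .inl (of_lt hAB hA hB hx hy h)
  · exact .inr (of_lt hAB.symm hB hA hy hx h)

theorem iff_succ (hAB : Disjoint A B) (hA : YMonotone A) (hB : YMonotone B)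
    (hpA : IsPolyomino A) (hpB : IsPolyomino B) {a a' b b' : ℤ}
    (ha : (a, r) ∈ A) (ha' : (a', r + 1) ∈ A) (hb : (b, r) ∈ B) (hb' : (b', r + 1) ∈ B) :
    LeftOf A B r ↔ LeftOf A B (r + 1) := by
  obtain ⟨x, hx, hx'⟩ := hpA.exists_mem_row_mem_row_succ ha ha'
  obtain ⟨y, hy, hy'⟩ := hpB.exists_mem_row_mem_row_succ hb hb'
  have key : ∀ s, (x, s) ∈ A → (y, s) ∈ B → (LeftOf A B s ↔ x < y) := fun s hxs hys =>
    ⟨fun h => h.2.2 x y hxs hys, of_lt hAB hA hB hxs hys⟩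
  exact (key r hx hy).trans (key (r + 1) hx' hy').symm

theorem iff_of_mem (hAB : Disjoint A B) (hA : YMonotone A) (hB : YMonotone B)
    (hpA : IsPolyomino A) (hpB : IsPolyomino B) {r' a a' b b' : ℤ}
    (ha : (a, r) ∈ A) (ha' : (a', r') ∈ A) (hb : (b, r) ∈ B) (hb' : (b', r') ∈ B) :
    LeftOf A B r ↔ LeftOf A B r' := by
  wlog hrr' : r ≤ r' generalizing r r' a a' b b'
  · exact (this ha' ha hb' hb (le_of_not_ge hrr')).symm
  have hrow : ∀ k, r ≤ k → k ≤ r' → (∃ x, (x, k) ∈ A) ∧ ∃ y, (y, k) ∈ B := fun k h₁ h₂ =>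
    ⟨hpA.exists_mem_row_of_le_of_le ha ha' h₁ h₂, hpB.exists_mem_row_of_le_of_le hb hb' h₁ h₂⟩
  refine Int.leInduction (motive := fun k _ => k ≤ r' → (LeftOf A B r ↔ LeftOf A B k))
    (fun _ => Iff.rfl) (fun k hk ih hk' => ?_) r' hrr' le_rfl
  obtain ⟨⟨x, hx⟩, y, hy⟩ := hrow k hk (by omega)
  obtain ⟨⟨x', hx'⟩, y', hy'⟩ := hrow (k + 1) (by omega) hk'
  exact (ih (by omega)).trans (iff_succ hAB hA hB hpA hpB hx hx' hy hy')

end LeftOf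

def lowestRow (A : Finset (ℤ × ℤ)) : WithTop ℤ := (A.image Prod.snd).min

theorem lowestRow_le {A : Finset (ℤ × ℤ)} {c : ℤ × ℤ} (hc : c ∈ A) :
    lowestRow A ≤ (c.2 : WithTop ℤ) :=
  Finset.min_le (Finset.mem_image_of_mem _ hc)

theorem exists_mem_lowestRow {A : Finset (ℤ × ℤ)} (hA : A.Nonempty) :
    ∃ x, ∃ r : ℤ, lowestRow A = r ∧ (x, r) ∈ A := by
  obtain ⟨r, hr⟩ := Finset.min_of_nonempty (hA.image Prod.snd)
  obtain ⟨⟨x, r'⟩, hx, rfl⟩ := Finset.mem_image.mp (Finset.mem_of_min hr)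
  exact ⟨x, r', hr, hx⟩

theorem IsPolyomino.exists_mem_lowestRow_of_le {A B : Finset (ℤ × ℤ)} (hA : IsPolyomino A)
    {a b r r₀ : ℤ} (ha : (a, r) ∈ A) (hb : (b, r) ∈ B) (hle : lowestRow A ≤ lowestRow B)
    (hr₀ : lowestRow B = r₀) : ∃ x, (x, r₀) ∈ A := by
  obtain ⟨x, r₁, hr₁, hx⟩ := exists_mem_lowestRow ⟨_, ha⟩
  have h₁ : r₁ ≤ r₀ := by rw [hr₁, hr₀] at hle; exact_mod_cast hle
  have h₂ : r₀ ≤ r := WithTop.coe_le_coe.mp (hr₀ ▸ lowestRow_le hb)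
  exact hA.exists_mem_row_of_le_of_le hx ha h₁ h₂

def Prec {ι : Type*} (S : ι → Finset (ℤ × ℤ)) (i j : ι) : Prop := ∃ r, LeftOf (S i) (S j) r

section Prec

variable {ι : Type*} {S : ι → Finset (ℤ × ℤ)}

theorem Prec.irrefl (i : ι) : ¬Prec S i i := fun ⟨_, h⟩ => LeftOf.irrefl h

theorem Prec.leftOf (hpoly : ∀ i, IsPolyomino (S i))
    (hdisj : Pairwise fun i j => Disjoint (S i) (S j)) (hmono : ∀ i, YMonotone (S i))
    {i j : ι} (h : Prec S i j) {r a b : ℤ} (ha : (a, r) ∈ S i) (hb : (b, r) ∈ S j) :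
    LeftOf (S i) (S j) r := by
  obtain ⟨r', h'⟩ := h
  have hij : i ≠ j := by rintro rfl; exact LeftOf.irrefl h'
  obtain ⟨⟨a', ha'⟩, ⟨b', hb'⟩, -⟩ := id h'
  exact (LeftOf.iff_of_mem (hdisj hij) (hmono i) (hmono j) (hpoly i) (hpoly j)
    ha' ha hb' hb).mp h'

theorem Prec.trans_of_lowestRow_le (hpoly : ∀ i, IsPolyomino (S i))
    (hdisj : Pairwise fun i j => Disjoint (S i) (S j)) (hmono : ∀ i, YMonotone (S i))
    {i j k : ι} (hij : Prec S i j) (hjk : Prec S j k)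
    (hi : lowestRow (S i) ≤ lowestRow (S j)) (hk : lowestRow (S k) ≤ lowestRow (S j)) :
    Prec S i k := by
  obtain ⟨r, ⟨x, hx⟩, ⟨y, hy⟩, -⟩ := id hij
  obtain ⟨r', ⟨y', hy'⟩, ⟨z, hz⟩, -⟩ := id hjk
  obtain ⟨y₀, r₀, hr₀, hy₀⟩ := exists_mem_lowestRow ⟨_, hy⟩
  obtain ⟨x₀, hx₀⟩ := (hpoly i).exists_mem_lowestRow_of_le hx hy hi hr₀
  obtain ⟨z₀, hz₀⟩ := (hpoly k).exists_mem_lowestRow_of_le hz hy' hk hr₀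
  exact ⟨r₀, (hij.leftOf hpoly hdisj hmono hx₀ hy₀).trans (hjk.leftOf hpoly hdisj hmono hy₀ hz₀)⟩

end Prec

def translateX (c : ℝ) (p : Plane) : Plane := p + c • EuclideanSpace.single 0 1

@[simp]
theorem translateX_apply_zero (c : ℝ) (p : Plane) : translateX c p 0 = p 0 + c := by
  simp [translateX]

@[simp]
theorem translateX_apply_one (c : ℝ) (p : Plane) : translateX c p 1 = p 1 := by
  simp [translateX]

theorem isometry_translateX (c : ℝ) : Isometry (translateX c) := isometry_add_right _

theorem translateX_zero : translateX 0 = id := by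
  funext p
  simp [translateX]

theorem dist_translateX_self (c : ℝ) (p : Plane) : dist (translateX c p) p = |c| := by
  simp [translateX, dist_eq_norm, norm_smul]

theorem translateX_image_eq_preimage (c : ℝ) (X : Set Plane) :
    translateX c '' X = translateX (-c) ⁻¹' X :=
  congrFun (Set.image_eq_preimage_of_inverse (fun p => by simp [translateX])
    (fun p => by simp [translateX])) X

theorem exists_cell_of_mem_translateX_region {A : Finset (ℤ × ℤ)} {u : ℝ} {p : Plane}
    (hp : p ∈ translateX u '' Region A) {r : ℤ} (hr : (r : ℝ) < p 1) (hr' : p 1 < r + 1) :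
    ∃ a, (a, r) ∈ A ∧ (a : ℝ) ≤ p 0 - u ∧ p 0 - u ≤ a + 1 := by
  rw [translateX_image_eq_preimage] at hp
  obtain ⟨⟨a, r'⟩, hc, ⟨ha, ha'⟩, hr₁, hr₁'⟩ := hp
  simp only [translateX_apply_zero, translateX_apply_one] at ha ha' hr₁ hr₁'
  obtain rfl : r' = r := by
    have : r' < r + 1 := by exact_mod_cast (show (r' : ℝ) < r + 1 by linarith)
    have : r < r' + 1 := by exact_mod_cast (show (r : ℝ) < r' + 1 by linarith)
    omega
  exact ⟨a, hc, by linarith, by linarith⟩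

theorem exists_cells_of_mem_interior {A : Finset (ℤ × ℤ)} {u : ℝ} {q : Plane}
    (hq : q ∈ interior (translateX u '' Region A)) {r : ℤ} (hr : (r : ℝ) < q 1)
    (hr' : q 1 < r + 1) :
    (∃ a, (a, r) ∈ A ∧ (a : ℝ) + u < q 0) ∧ ∃ a, (a, r) ∈ A ∧ q 0 < a + 1 + u := by
  obtain ⟨ε, hε, hball⟩ := Metric.mem_nhds_iff.mp (mem_interior_iff_mem_nhds.mp hq)
  have hmem : ∀ c, |c| < ε → translateX c q ∈ translateX u '' Region A := fun c hc =>
    hball (by rwa [Metric.mem_ball, dist_translateX_self])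
  have hε' : |ε / 2| < ε := by rw [abs_of_pos (half_pos hε)]; exact half_lt_self hε
  obtain ⟨a, ha, ha', -⟩ := exists_cell_of_mem_translateX_region
    (hmem (-(ε / 2)) (by rwa [abs_neg])) (by simpa using hr) (by simpa using hr')
  obtain ⟨b, hb, -, hb'⟩ := exists_cell_of_mem_translateX_region
    (hmem (ε / 2) hε') (by simpa using hr) (by simpa using hr')
  simp only [translateX_apply_zero] at ha' hb'
  exact ⟨⟨a, ha, by linarith⟩, ⟨b, hb, by linarith⟩⟩

theorem IsOpen.exists_mem_strip {U : Set Plane} (hU : IsOpen U) (hne : U.Nonempty) :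
    ∃ q ∈ U, ∃ r : ℤ, (r : ℝ) < q 1 ∧ q 1 < r + 1 := by
  let proj : Plane →L[ℝ] ℝ := EuclideanSpace.proj 1
  have hdense : Dense (proj ⁻¹' (Set.range ((↑) : ℤ → ℝ))ᶜ) :=
    ((Set.countable_range _).dense_compl ℝ).preimage
      (proj.isOpenMap fun x => ⟨EuclideanSpace.single 1 x, by simp [proj]⟩)
  obtain ⟨q, hqU, hq⟩ := hdense.inter_open_nonempty U hU hne
  refine ⟨q, hqU, ⌊q 1⌋, (Int.floor_le _).lt_of_ne fun h => hq ⟨_, h⟩, Int.lt_floor_add_one _⟩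

theorem notMem_interior_of_leftOf {A B : Finset (ℤ × ℤ)} {u v : ℝ} {q : Plane} {r : ℤ}
    (hr : (r : ℝ) < q 1) (hr' : q 1 < r + 1) (hAB : LeftOf A B r) (huv : u ≤ v)
    (hqA : q ∈ interior (translateX u '' Region A)) :
    q ∉ interior (translateX v '' Region B) := fun hqB => by
  obtain ⟨-, a, ha, haq⟩ := exists_cells_of_mem_interior hqA hr hr'
  obtain ⟨⟨b, hb, hbq⟩, -⟩ := exists_cells_of_mem_interior hqB hr hr'
  have : (a : ℝ) + 1 ≤ b := by exact_mod_cast hAB.2.2 a b ha hb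
  linarith

theorem disjoint_interior_translateX_region {A B : Finset (ℤ × ℤ)} (hAB : Disjoint A B)
    (hA : YMonotone A) (hB : YMonotone B) {u v : ℝ} (huv : ∀ r, LeftOf A B r → u ≤ v)
    (hvu : ∀ r, LeftOf B A r → v ≤ u) :
    Disjoint (interior (translateX u '' Region A)) (interior (translateX v '' Region B)) := by
  rw [Set.disjoint_iff_inter_eq_empty, ← Set.not_nonempty_iff_eq_empty]
  intro hne
  obtain ⟨q, ⟨hqA, hqB⟩, r, hr, hr'⟩ :=
    (isOpen_interior.inter isOpen_interior).exists_mem_strip hne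
  obtain ⟨⟨a, ha, -⟩, -⟩ := exists_cells_of_mem_interior hqA hr hr'
  obtain ⟨⟨b, hb, -⟩, -⟩ := exists_cells_of_mem_interior hqB hr hr'
  rcases LeftOf.total hAB hA hB ha hb with h | h
  · exact notMem_interior_of_leftOf hr hr' h (huv r h) hqA hqB
  · exact notMem_interior_of_leftOf hr hr' h (hvu r h) hqB hqA

def horizontalMotion {n : ℕ} (s : Fin n → ℝ) : Fin n → unitInterval → Plane → Plane :=
  fun i t => translateX (t * s i)

theorem isValidMotion_horizontalMotion {n : ℕ} {S : Fin n → Finset (ℤ × ℤ)}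
    (hdisj : Pairwise fun i j => Disjoint (S i) (S j)) (hmono : ∀ i, YMonotone (S i))
    {s : Fin n → ℝ} (hs : ∀ i j r, LeftOf (S i) (S j) r → s i ≤ s j) :
    IsValidMotion (fun i => Region (S i)) (horizontalMotion s) := by
  refine ⟨fun i t => isometry_translateX _, fun i => ?_, fun i => ?_, fun t i j hij => ?_⟩
  · simp [horizontalMotion, translateX_zero]
  · simp only [horizontalMotion, translateX]
    fun_prop
  · have ht : (0 : ℝ) ≤ t := t.2.1
    exact disjoint_interior_translateX_region (hdisj hij) (hmono i) (hmono j)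
      (fun r h => mul_le_mul_of_nonneg_left (hs i j r h) ht)
      (fun r h => mul_le_mul_of_nonneg_left (hs j i r h) ht)

theorem le_setDist_translateX {X Y : Set Plane} (hX : X.Nonempty) (hY : Y.Nonempty) {W : ℝ}
    (hXW : ∀ p ∈ X, |p 0| ≤ W) (hYW : ∀ p ∈ Y, |p 0| ≤ W) {d u v : ℝ}
    (huv : d + 2 * W ≤ |u - v|) : d ≤ setDist (translateX u '' X) (translateX v '' Y) := by
  refine le_csInf ((hX.image _).image2 (hY.image _)) ?_
  rintro _ ⟨_, ⟨p, hp, rfl⟩, _, ⟨q, hq, rfl⟩, rfl⟩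
  have hpq := PiLp.dist_apply_le (translateX u p) (translateX v q) 0
  rw [translateX_apply_zero, translateX_apply_zero, Real.dist_eq] at hpq
  have huv' : |u - v| ≤ |p 0 + u - (q 0 + v)| + |-p 0| + |q 0| := by
    simpa only [show p 0 + u - (q 0 + v) + -p 0 + q 0 = u - v by ring] using
      abs_add_three (p 0 + u - (q 0 + v)) (-p 0) (q 0)
  linarith [hXW p hp, hYW q hq, abs_neg (p 0)]

theorem Region.nonempty {A : Finset (ℤ × ℤ)} (hA : A.Nonempty) : (Region A).Nonempty := by
  obtain ⟨c, hc⟩ := hA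
  exact ⟨!₂[c.1, c.2], c, hc, by simp, by simp⟩

theorem exists_bound_region {ι : Type*} [Fintype ι] (S : ι → Finset (ℤ × ℤ)) :
    ∃ W, 0 ≤ W ∧ ∀ i, ∀ p ∈ Region (S i), |p 0| ≤ W := by
  refine ⟨∑ i, ∑ c ∈ S i, (|(c.1 : ℝ)| + 1), by positivity, fun i p ⟨c, hc, hp, _⟩ => ?_⟩
  calc |p 0| ≤ |(c.1 : ℝ)| + 1 := by
        rw [abs_le]
        constructor <;> linarith [hp.1, hp.2, neg_abs_le (c.1 : ℝ), le_abs_self (c.1 : ℝ)]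
    _ ≤ ∑ c ∈ S i, (|(c.1 : ℝ)| + 1) :=
        Finset.single_le_sum (f := fun c : ℤ × ℤ => |(c.1 : ℝ)| + 1) (fun _ _ => by positivity) hc
    _ ≤ _ := Finset.single_le_sum (f := fun i => ∑ c ∈ S i, (|(c.1 : ℝ)| + 1))
        (fun _ _ => by positivity) (Finset.mem_univ i)

theorem one_le_abs_natCast_sub_natCast {a b : ℕ} (h : a ≠ b) : 1 ≤ |(a : ℝ) - b| := by
  have : (1 : ℤ) ≤ |(a : ℤ) - b| := Int.one_le_abs (sub_ne_zero.mpr (by exact_mod_cast h))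
  exact_mod_cast this

/-- A system of pairwise disjoint y-monotone polyominoes can be spread apart by a valid
motion consisting only of horizontal translations: for every `d > 0` there is such a motion
after which all pieces are pairwise at distance at least `d`. -/
theorem ymonotone_spread_by_horizontal_translations (n : ℕ) (S : Fin n → Finset (ℤ × ℤ))
    (hpoly : ∀ i, IsPolyomino (S i))
    (hdisj : Pairwise fun i j => Disjoint (S i) (S j))
    (hmono : ∀ i, YMonotone (S i)) :
    ∀ d : ℝ, 0 < d → ∃ g : Fin n → unitInterval → Plane → Plane,
      IsValidMotion (fun i => Region (S i)) g ∧
      (∀ i t, ∃ c : ℝ, ∀ p : Plane, g i t p 0 = p 0 + c ∧ g i t p 1 = p 1) ∧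
      Pairwise fun i j =>
        d ≤ setDist (g i 1 '' Region (S i)) (g j 1 '' Region (S j)) := by
  intro d hd
  obtain ⟨ρ, hρinj, hρ⟩ := exists_injective_rank (fun i => lowestRow (S i)) (Prec.irrefl (S := S))
    fun _ _ _ => Prec.trans_of_lowestRow_le hpoly hdisj hmono
  obtain ⟨W, hW₀, hW⟩ := exists_bound_region S
  -- speeds of distinct pieces differ by at least `d + 2 W`, where `W` bounds all `|x|`
  set M := d + 2 * W
  have hM : 0 ≤ M := by positivity
  refine ⟨horizontalMotion fun i => M * ρ i, isValidMotion_horizontalMotion hdisj hmono ?_,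
    fun i t => ⟨_, fun p => ⟨translateX_apply_zero _ p, translateX_apply_one _ p⟩⟩,
    fun i j hij => ?_⟩
  · exact fun i j r h => mul_le_mul_of_nonneg_left (by exact_mod_cast (hρ i j ⟨r, h⟩).le) hM
  · refine le_setDist_translateX (Region.nonempty (hpoly i).1) (Region.nonempty (hpoly j).1)
      (hW i) (hW j) ?_
    calc M = M * 1 := (mul_one M).symm
      _ ≤ M * |(ρ i : ℝ) - ρ j| :=
        mul_le_mul_of_nonneg_left (one_le_abs_natCast_sub_natCast (hρinj.ne hij)) hM
      _ = _ := by simp [← mul_sub, abs_mul, abs_of_nonneg hM]
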